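/- arXiv:1204.4840 — 2 statements merged into one kernel-verified Lean document; each statement's English description precedes it below -/
import Mathlib

section
/- Let 0 = r₀ < r₁ < ⋯ < r_L and 0 ≤ a₀ < a₁ < ⋯ < a_L be such that the points (a_ℓ, r_ℓ) define a concave nondecreasing piecewise linear function. Fix ω > 0 and define breakpoints s₀ = 0, s_{L+1} = ∞, and s_ℓ = (a_ℓ − a_{ℓ−1}) / (ω (r_ℓ − r_{ℓ−1})) for ℓ = 1,…,L. Then s₁ ≤ s₂ ≤ ⋯ ≤ s_L, and for each ℓ and each s ∈ [s_ℓ, s_{ℓ+1}), the index ℓ maximizes j ↦ ω r_j − a_j / s over j ∈ {0,…,L}. -/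
/-!
Moving from mode `ℓ` to mode `ℓ + 1` changes the objective `ω r_j − a_j / x` by
`ω (r_{ℓ+1} − r_ℓ) − (a_{ℓ+1} − a_ℓ) / x`, which is nonnegative exactly when `x` is at least the
breakpoint `s_{ℓ+1}`. Concavity orders the breakpoints, so for `x ∈ [s_ℓ, s_{ℓ+1})` the objective
increases up to mode `ℓ` and decreases after it.
-/

open Order

theorem apply_le_apply_of_le_succ_of_succ_le {α β : Type*} [LinearOrder α] [SuccOrder α]
    [IsSuccArchimedean α] [Preorder β] {f : α → β} {ℓ : α}
    (hup : ∀ a < ℓ, f a ≤ f (succ a)) (hdown : ∀ a, ℓ ≤ a → f (succ a) ≤ f a) (j : α) :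
    f j ≤ f ℓ := by
  rcases le_total j ℓ with hj | hj
  · refine monotoneOn_of_le_succ Set.ordConnected_Iic (fun a ha _ hsucc => hup a ?_)
      hj le_rfl hj
    exact (lt_succ_of_not_isMax ha).trans_le hsucc
  · exact antitoneOn_of_succ_le Set.ordConnected_Ici (fun a _ ha _ => hdown a ha)
      le_rfl hj hj

theorem Fin.apply_le_apply_of_le_succ_of_succ_le {n : ℕ} {β : Type*} [Preorder β]
    {f : Fin (n + 1) → β} {ℓ : Fin (n + 1)}
    (hup : ∀ i : Fin n, i.castSucc < ℓ → f i.castSucc ≤ f i.succ)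
    (hdown : ∀ i : Fin n, ℓ ≤ i.castSucc → f i.succ ≤ f i.castSucc) (j : Fin (n + 1)) :
    f j ≤ f ℓ := by
  refine _root_.apply_le_apply_of_le_succ_of_succ_le (fun a ha => ?_) (fun a ha => ?_) j
  · obtain ⟨i, rfl⟩ := Fin.exists_castSucc_eq.mpr (ha.trans_le (Fin.le_last ℓ)).ne
    rw [Fin.orderSucc_castSucc]
    exact hup i ha
  · induction a using Fin.lastCases with
    | last => rw [Fin.orderSucc_last]
    | cast i =>
      rw [Fin.orderSucc_castSucc]
      exact hdown i ha

section Breakpoint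

variable {K : Type*} [Field K] [LinearOrder K] [IsStrictOrderedRing K] {ω r₀ r₁ a₀ a₁ x : K}

theorem mul_sub_div_le_mul_sub_div_iff (hω : 0 < ω) (hr : r₀ < r₁) (hx : 0 < x) :
    ω * r₀ - a₀ / x ≤ ω * r₁ - a₁ / x ↔ (a₁ - a₀) / (ω * (r₁ - r₀)) ≤ x := by
  rw [div_le_comm₀ (mul_pos hω (sub_pos.mpr hr)) hx, sub_div]
  constructor <;> intro h <;> linarith

theorem mul_sub_div_lt_mul_sub_div_iff (hω : 0 < ω) (hr : r₀ < r₁) (hx : 0 < x) :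
    ω * r₁ - a₁ / x < ω * r₀ - a₀ / x ↔ x < (a₁ - a₀) / (ω * (r₁ - r₀)) := by
  simpa only [not_le] using (mul_sub_div_le_mul_sub_div_iff hω hr hx).not

end Breakpoint

theorem stmt6_general (L : ℕ) (r a : Fin (L + 1) → ℝ)
    (hrmono : StrictMono r)
    -- concavity of the piecewise linear interpolation through (a_ℓ, r_ℓ):
    -- the inverse slopes (a_ℓ − a_{ℓ−1})/(r_ℓ − r_{ℓ−1}) are nondecreasing in ℓ
    (hconc : ∀ i j : Fin L, i ≤ j →
      (a i.succ - a i.castSucc) / (r i.succ - r i.castSucc) ≤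
      (a j.succ - a j.castSucc) / (r j.succ - r j.castSucc))
    (ω : ℝ) (hω : 0 < ω)
    (s : Fin L → ℝ)
    (hs : ∀ i : Fin L, s i = (a i.succ - a i.castSucc) / (ω * (r i.succ - r i.castSucc))) :
    (∀ i j : Fin L, i ≤ j → s i ≤ s j) ∧
    (∀ ℓ : Fin (L + 1), ∀ x : ℝ, 0 < x →
      (∀ i : Fin L, (i : ℕ) < (ℓ : ℕ) → s i ≤ x) →   -- x ≥ s_ℓ
      (∀ i : Fin L, (ℓ : ℕ) ≤ (i : ℕ) → x < s i) →   -- x < s_{ℓ+1}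
      ∀ j : Fin (L + 1), ω * r j - a j / x ≤ ω * r ℓ - a ℓ / x) := by
  have hr (i : Fin L) : r i.castSucc < r i.succ := hrmono i.castSucc_lt_succ
  refine ⟨fun i j hij => ?_, fun ℓ x hx hlow hhigh => ?_⟩
  · rw [hs, hs, div_mul_eq_div_div_swap, div_mul_eq_div_div_swap]
    exact div_le_div_of_nonneg_right (hconc i j hij) hω.le
  · refine Fin.apply_le_apply_of_le_succ_of_succ_le (fun i hi => ?_) (fun i hi => ?_)
    · rw [mul_sub_div_le_mul_sub_div_iff hω (hr i) hx, ← hs]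
      exact hlow i hi
    · refine ((mul_sub_div_lt_mul_sub_div_iff hω (hr i) hx).mpr ?_).le
      rw [← hs]
      exact hhigh i hi

/-- Single-sensor decision regions: with breakpoints
`s_ℓ = (a_ℓ − a_{ℓ−1})/(ω (r_ℓ − r_{ℓ−1}))` (here `s i` is the paper's `s_{i+1}`), the
breakpoints are ordered, and on each interval `[s_ℓ, s_{ℓ+1})` (with `s₀ = 0`,
`s_{L+1} = ∞`) mode `ℓ` maximizes `j ↦ ω r_j − a_j / x`. -/
theorem stmt6 (L : ℕ) (r a : Fin (L + 1) → ℝ)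
    (hr0 : r 0 = 0) (hrmono : StrictMono r)
    (ha0 : 0 ≤ a 0) (hamono : StrictMono a)
    -- concavity of the piecewise linear interpolation through (a_ℓ, r_ℓ):
    -- the inverse slopes (a_ℓ − a_{ℓ−1})/(r_ℓ − r_{ℓ−1}) are nondecreasing in ℓ
    (hconc : ∀ i j : Fin L, i ≤ j →
      (a i.succ - a i.castSucc) / (r i.succ - r i.castSucc) ≤
      (a j.succ - a j.castSucc) / (r j.succ - r j.castSucc))
    (ω : ℝ) (hω : 0 < ω)
    (s : Fin L → ℝ)
    (hs : ∀ i : Fin L, s i = (a i.succ - a i.castSucc) / (ω * (r i.succ - r i.castSucc))) :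
    (∀ i j : Fin L, i ≤ j → s i ≤ s j) ∧
    (∀ ℓ : Fin (L + 1), ∀ x : ℝ, 0 < x →
      (∀ i : Fin L, (i : ℕ) < (ℓ : ℕ) → s i ≤ x) →   -- x ≥ s_ℓ
      (∀ i : Fin L, (ℓ : ℕ) ≤ (i : ℕ) → x < s i) →   -- x < s_{ℓ+1}
      ∀ j : Fin (L + 1), ω * r j - a j / x ≤ ω * r ℓ - a ℓ / x) :=
  stmt6_general L r a hrmono hconc ω hω s hs
end

section
/- Let μ : [a₀, ∞) → ℝ be bounded by R_L, and construct points (ã_ℓ, μ̃_ℓ) recursively: ã₀ = a₀, μ̃₀ = 0; given (ã_ℓ, μ̃_ℓ), if there exists a slope m_ℓ ≥ 0 such that the line y = m_ℓ(x − ã_ℓ) + μ̃_ℓ satisfies μ(x) ≤ m_ℓ(x − ã_ℓ) + μ̃_ℓ for all x > ã_ℓ, set ã_{ℓ+1} to be the abscissa where this line meets y = R_{ℓ+1} and μ̃_{ℓ+1} = R_{ℓ+1}. Then the piecewise linear function μ̃ through these points (constant R_L after ã_L) is concave, nondecreasing, and satisfies μ̃(x) ≥ μ(x) for all x ≥ a₀,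 provided 0 < R₁ < ⋯ < R_L and each μ̃_ℓ < R_{ℓ+1}. -/
/-!
Extend the slopes by `m_L = 0`, so that the constant tail of `g` is the line of slope `0`
through `(ã_L, R_L)`. The line of step `ℓ` passes through `(ã_{ℓ+1}, R_{ℓ+1})` and dominates
`μ` beyond `ã_ℓ`, so `m_ℓ` is admissible at step `ℓ + 1` and the least slopes are
nonincreasing. Lines with nonincreasing slopes that meet consecutively at the kinks have the
broken line `g` as their lower envelope on `[a₀, ∞)`, and an attained minimum of affine
nondecreasing functions is concave and nondecreasing. Domination of `μ` holds segment by
segment.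
-/

open Set

section LowerEnvelope

variable {𝕜 E β ι : Type*}

theorem ConcaveOn.of_isLeast_range [Semiring 𝕜] [PartialOrder 𝕜] [AddCommMonoid E]
    [AddCommMonoid β] [PartialOrder β] [IsOrderedAddMonoid β] [SMul 𝕜 E] [Module 𝕜 β]
    [PosSMulMono 𝕜 β] {s : Set E} {F : ι → E → β} {g : E → β} (hs : Convex 𝕜 s)
    (hF : ∀ i, ConcaveOn 𝕜 s (F i)) (hg : ∀ x ∈ s, IsLeast (range fun i => F i x) (g x)) :
    ConcaveOn 𝕜 s g := by
  refine ⟨hs, fun x hx y hy a b ha hb hab => ?_⟩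
  obtain ⟨i, hi⟩ := (hg _ (hs hx hy ha hb hab)).1
  calc a • g x + b • g y ≤ a • F i x + b • F i y := by
        gcongr
        exacts [(hg x hx).2 ⟨i, rfl⟩, (hg y hy).2 ⟨i, rfl⟩]
    _ ≤ F i (a • x + b • y) := (hF i).2 hx hy ha hb hab
    _ = g (a • x + b • y) := hi

theorem MonotoneOn.of_isLeast_range [Preorder E] [Preorder β] {s : Set E} {F : ι → E → β}
    {g : E → β} (hF : ∀ i, MonotoneOn (F i) s)
    (hg : ∀ x ∈ s, IsLeast (range fun i => F i x) (g x)) : MonotoneOn g s := by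
  intro x hx y hy hxy
  obtain ⟨i, hi⟩ := (hg y hy).1
  rw [← hi]
  exact ((hg x hx).2 ⟨i, rfl⟩).trans (hF i hx hy hxy)

end LowerEnvelope

theorem exists_le_forall_lt_of_le {ι α : Type*} [Fintype ι] [LinearOrder ι] [LinearOrder α]
    {a : ι → α} {x : α} {i : ι} (hi : a i ≤ x) :
    ∃ ℓ, a ℓ ≤ x ∧ ∀ j, ℓ < j → x < a j := by
  classical
  obtain ⟨ℓ, hℓ, hmax⟩ :=
    Finset.exists_max_image (Finset.univ.filter (a · ≤ x)) id ⟨i, by simpa using hi⟩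
  refine ⟨ℓ, (Finset.mem_filter.1 hℓ).2, fun j hj => not_le.1 fun hjx => ?_⟩
  exact (hmax j (by simpa using hjx)).not_gt hj

def supportLine {ι : Type*} (a s r : ι → ℝ) (i : ι) (x : ℝ) : ℝ := s i * (x - a i) + r i

section SupportLine

open Order

variable {ι : Type*} {a s r : ι → ℝ}

theorem concaveOn_supportLine {t : Set ℝ} (ht : Convex ℝ t) (i : ι) :
    ConcaveOn ℝ t (supportLine a s r i) :=
  ⟨ht, fun _ _ _ _ p q _ _ hpq => le_of_eq <| by
    simp only [supportLine, smul_eq_mul]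
    linear_combination (r i - s i * a i) * hpq⟩

theorem monotone_supportLine {i : ι} (hi : 0 ≤ s i) : Monotone (supportLine a s r i) :=
  fun _ _ hxy => by unfold supportLine; gcongr

variable [LinearOrder ι] [SuccOrder ι]

theorem supportLine_succ_sub
    (hr : ∀ i, ¬IsMax i → r (succ i) = supportLine a s r i (a (succ i)))
    {i : ι} (hi : ¬IsMax i) (x : ℝ) :
    supportLine a s r (succ i) x - supportLine a s r i x =
      (s (succ i) - s i) * (x - a (succ i)) := by
  simp only [supportLine] at hr ⊢
  rw [hr i hi]
  ring

variable [IsSuccArchimedean ι]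

/-- Consecutive lines meet at the kinks, so along the index the lines decrease while the
kinks lie left of `x` and increase once they lie right of it. -/
theorem supportLine_le_supportLine (ha : Monotone a) (hs : Antitone s)
    (hr : ∀ i, ¬IsMax i → r (succ i) = supportLine a s r i (a (succ i)))
    {ℓ : ι} {x : ℝ} (hℓ : a ℓ ≤ x) (hx : ∀ j, ℓ < j → x ≤ a j) (j : ι) :
    supportLine a s r ℓ x ≤ supportLine a s r j x := by
  rcases le_total j ℓ with hjℓ | hℓj
  · refine antitoneOn_of_succ_le (f := fun j => supportLine a s r j x) ordConnected_Iic
      (fun k hk _ hkℓ => ?_) hjℓ le_rfl hjℓ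
    have hstep := supportLine_succ_sub hr hk x
    have : a (succ k) ≤ x := (ha hkℓ).trans hℓ
    nlinarith [hs (le_succ k)]
  · refine monotoneOn_of_le_succ (f := fun j => supportLine a s r j x) ordConnected_Ici
      (fun k hk hℓk _ => ?_) le_rfl hℓj hℓj
    have hstep := supportLine_succ_sub hr hk x
    have : x ≤ a (succ k) := hx _ (hℓk.trans_lt (lt_succ_of_not_isMax hk))
    nlinarith [hs (le_succ k)]

theorem isLeast_supportLine (ha : Monotone a) (hs : Antitone s)
    (hr : ∀ i, ¬IsMax i → r (succ i) = supportLine a s r i (a (succ i)))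
    {ℓ : ι} {x : ℝ} (hℓ : a ℓ ≤ x) (hx : ∀ j, ℓ < j → x ≤ a j) :
    IsLeast (range fun j => supportLine a s r j x) (supportLine a s r ℓ x) :=
  ⟨⟨ℓ, rfl⟩, by
    rintro _ ⟨j, rfl⟩
    exact supportLine_le_supportLine ha hs hr hℓ hx j⟩

end SupportLine

def dominatingSlopes (μ : ℝ → ℝ) (a r : ℝ) : Set ℝ :=
  {c | 0 ≤ c ∧ ∀ x, a ≤ x → μ x ≤ c * (x - a) + r}

section DominatingSlopes

variable {μ : ℝ → ℝ} {a r c : ℝ}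

theorem isClosed_dominatingSlopes : IsClosed (dominatingSlopes μ a r) := by
  have : dominatingSlopes μ a r = Ici 0 ∩ ⋂ x ∈ Ici a, {c | μ x ≤ c * (x - a) + r} := by
    ext; simp [dominatingSlopes]
  rw [this]
  exact isClosed_Ici.inter (isClosed_biInter fun x _ => isClosed_le continuous_const (by fun_prop))

theorem bddBelow_dominatingSlopes : BddBelow (dominatingSlopes μ a r) :=
  ⟨0, fun _ hc => hc.1⟩

theorem csInf_mem_dominatingSlopes (h : (dominatingSlopes μ a r).Nonempty) :
    sInf (dominatingSlopes μ a r) ∈ dominatingSlopes μ a r :=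
  isClosed_dominatingSlopes.csInf_mem h bddBelow_dominatingSlopes

theorem mem_dominatingSlopes_of_le (hc : c ∈ dominatingSlopes μ a r) {a' : ℝ} (ha : a ≤ a') :
    c ∈ dominatingSlopes μ a' (c * (a' - a) + r) :=
  ⟨hc.1, fun x hx => (hc.2 x (ha.trans hx)).trans_eq (by ring)⟩

end DominatingSlopes

section Construction

variable {L : ℕ} {atil R : Fin (L + 1) → ℝ} {m : Fin L → ℝ}

theorem antitone_snoc_zero (hm0 : ∀ ℓ, 0 ≤ m ℓ)
    (hstep : ∀ ℓ j : Fin L, j.castSucc = ℓ.succ → m j ≤ m ℓ) :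
    Antitone (Fin.snoc m 0 : Fin (L + 1) → ℝ) := by
  refine antitone_of_succ_le fun i hi => ?_
  obtain ⟨k, rfl⟩ | rfl := i.eq_castSucc_or_eq_last
  · rw [Fin.orderSucc_castSucc, Fin.snoc_castSucc]
    obtain ⟨j, hj⟩ | hk := k.succ.eq_castSucc_or_eq_last
    · rw [hj, Fin.snoc_castSucc]
      exact hstep k j hj.symm
    · rw [hk, Fin.snoc_last]
      exact hm0 k
  · exact (hi fun b _ => b.le_last).elim

theorem apply_succ_eq_supportLine_snoc
    (hnext : ∀ ℓ : Fin L,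
      m ℓ * (atil ℓ.succ - atil ℓ.castSucc) + R ℓ.castSucc = R ℓ.succ)
    (i : Fin (L + 1)) (hi : ¬IsMax i) :
    R (Order.succ i) = supportLine atil (Fin.snoc m 0) R i (atil (Order.succ i)) := by
  obtain ⟨k, rfl⟩ | rfl := i.eq_castSucc_or_eq_last
  · rw [Fin.orderSucc_castSucc, supportLine, Fin.snoc_castSucc, hnext]
  · exact (hi fun b _ => b.le_last).elim

theorem eq_supportLine_snoc {g : ℝ → ℝ}
    (hgap : ∀ ℓ : Fin L, atil ℓ.castSucc < atil ℓ.succ)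
    (hnext : ∀ ℓ : Fin L,
      m ℓ * (atil ℓ.succ - atil ℓ.castSucc) + R ℓ.castSucc = R ℓ.succ)
    (hgseg : ∀ ℓ : Fin L, ∀ x ∈ Icc (atil ℓ.castSucc) (atil ℓ.succ),
      g x = R ℓ.castSucc + (R ℓ.succ - R ℓ.castSucc) / (atil ℓ.succ - atil ℓ.castSucc) *
        (x - atil ℓ.castSucc))
    (hgtail : ∀ x, atil (Fin.last L) ≤ x → g x = R (Fin.last L))
    {ℓ : Fin (L + 1)} {x : ℝ} (hℓ : atil ℓ ≤ x) (hx : ∀ j, ℓ < j → x < atil j) :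
    g x = supportLine atil (Fin.snoc m 0) R ℓ x := by
  obtain ⟨k, rfl⟩ | rfl := ℓ.eq_castSucc_or_eq_last
  · rw [hgseg k x ⟨hℓ, (hx _ k.castSucc_lt_succ).le⟩, ← hnext k, add_sub_cancel_right,
      mul_div_cancel_right₀ _ (sub_pos.2 (hgap k)).ne', supportLine, Fin.snoc_castSucc]
    ring
  · simp [hgtail x hℓ, supportLine]

theorem le_supportLine_snoc {μ : ℝ → ℝ} {a0 : ℝ}
    (hmS : ∀ ℓ, m ℓ ∈ dominatingSlopes μ (atil ℓ.castSucc) (R ℓ.castSucc))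
    (hμbdd : ∀ x, a0 ≤ x → μ x ≤ R (Fin.last L))
    {ℓ : Fin (L + 1)} {x : ℝ} (hx0 : a0 ≤ x) (hℓ : atil ℓ ≤ x) :
    μ x ≤ supportLine atil (Fin.snoc m 0) R ℓ x := by
  obtain ⟨k, rfl⟩ | rfl := ℓ.eq_castSucc_or_eq_last
  · simpa [supportLine] using (hmS k).2 x hℓ
  · simpa [supportLine] using hμbdd x hx0

end Construction

theorem stmt13_general (L : ℕ) (a0 : ℝ) (R : Fin (L + 1) → ℝ)
    (hRmono : StrictMono R)
    (μ g : ℝ → ℝ)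
    (hμbdd : ∀ x, a0 ≤ x → μ x ≤ R (Fin.last L))
    (atil : Fin (L + 1) → ℝ) (m : Fin L → ℝ)
    (ha0 : atil 0 = a0)
    -- existence of a dominating nonnegative slope at each step
    (hex : ∀ ℓ : Fin L, ∃ c : ℝ, 0 ≤ c ∧
      ∀ x, atil ℓ.castSucc ≤ x → μ x ≤ c * (x - atil ℓ.castSucc) + R ℓ.castSucc)
    -- m_ℓ is the least such slope (the tangent line of the construction)
    (hm : ∀ ℓ : Fin L, m ℓ = sInf {c : ℝ | 0 ≤ c ∧
      ∀ x, atil ℓ.castSucc ≤ x → μ x ≤ c * (x - atil ℓ.castSucc) + R ℓ.castSucc})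
    -- ã_{ℓ+1} is the abscissa where the line meets y = R_{ℓ+1}
    (hnext : ∀ ℓ : Fin L,
      m ℓ * (atil ℓ.succ - atil ℓ.castSucc) + R ℓ.castSucc = R ℓ.succ)
    -- g is the piecewise linear interpolation through the points (ã_ℓ, R_ℓ) …
    (hgseg : ∀ ℓ : Fin L, ∀ x ∈ Set.Icc (atil ℓ.castSucc) (atil ℓ.succ),
      g x = R ℓ.castSucc +
        (R ℓ.succ - R ℓ.castSucc) / (atil ℓ.succ - atil ℓ.castSucc) * (x - atil ℓ.castSucc))
    -- … constant R_L after ã_L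
    (hgtail : ∀ x, atil (Fin.last L) ≤ x → g x = R (Fin.last L)) :
    ConcaveOn ℝ (Set.Ici a0) g ∧ MonotoneOn g (Set.Ici a0) ∧
    ∀ x, a0 ≤ x → μ x ≤ g x := by
  have hmS ℓ : m ℓ ∈ dominatingSlopes μ (atil ℓ.castSucc) (R ℓ.castSucc) := by
    rw [hm ℓ]
    exact csInf_mem_dominatingSlopes (hex ℓ)
  have hgap (ℓ : Fin L) : atil ℓ.castSucc < atil ℓ.succ := sub_pos.1 <| pos_of_mul_pos_right
    (by linarith [hnext ℓ, hRmono ℓ.castSucc_lt_succ]) (hmS ℓ).1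
  have hatil : Monotone atil := (Fin.strictMono_iff_lt_succ.2 hgap).monotone
  -- each line dominates μ through the next kink, so the least slopes can only decrease
  have hslopes : Antitone (Fin.snoc m 0 : Fin (L + 1) → ℝ) := by
    refine antitone_snoc_zero (fun ℓ => (hmS ℓ).1) fun ℓ j hj => ?_
    rw [hm j, hj, ← hnext ℓ]
    exact csInf_le bddBelow_dominatingSlopes (mem_dominatingSlopes_of_le (hmS ℓ) (hgap ℓ).le)
  have hg x (hx : a0 ≤ x) :
      IsLeast (range fun j => supportLine atil (Fin.snoc m 0) R j x) (g x) ∧ μ x ≤ g x := by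
    obtain ⟨ℓ, hℓ, hlt⟩ := exists_le_forall_lt_of_le (i := 0) (ha0.trans_le hx)
    rw [eq_supportLine_snoc hgap hnext hgseg hgtail hℓ hlt]
    exact ⟨isLeast_supportLine hatil hslopes (apply_succ_eq_supportLine_snoc hnext) hℓ
      fun j hj => (hlt j hj).le, le_supportLine_snoc hmS hμbdd hx hℓ⟩
  refine ⟨.of_isLeast_range (convex_Ici a0) (fun i => concaveOn_supportLine (convex_Ici a0) i)
      fun x hx => (hg x hx).1, .of_isLeast_range (fun i => ?_) fun x hx => (hg x hx).1,
      fun x hx => (hg x hx).2⟩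
  exact (monotone_supportLine (by simpa using hslopes i.le_last)).monotoneOn _

/-- Construction of the piecewise linear concave upper bound `μ̃` on the effective rate
function `μ`: starting from `(ã₀, 0)`, each `m_ℓ` is the least nonnegative slope whose
line through `(ã_ℓ, R_ℓ)` dominates `μ` beyond `ã_ℓ` (the paper's tangent line), and
`ã_{ℓ+1}` is where that line meets the level `R_{ℓ+1}`.  The resulting piecewise linear
interpolation `g` (constant `R_L` after `ã_L`) is concave, nondecreasing, and dominates
`μ` on `[a₀, ∞)`. -/
theorem stmt13 (L : ℕ) (hL : 0 < L) (a0 : ℝ) (R : Fin (L + 1) → ℝ)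
    (hR0 : R 0 = 0) (hRmono : StrictMono R)
    (μ g : ℝ → ℝ)
    (hμbdd : ∀ x, a0 ≤ x → μ x ≤ R (Fin.last L))
    (atil : Fin (L + 1) → ℝ) (m : Fin L → ℝ)
    (ha0 : atil 0 = a0)
    -- existence of a dominating nonnegative slope at each step
    (hex : ∀ ℓ : Fin L, ∃ c : ℝ, 0 ≤ c ∧
      ∀ x, atil ℓ.castSucc ≤ x → μ x ≤ c * (x - atil ℓ.castSucc) + R ℓ.castSucc)
    -- m_ℓ is the least such slope (the tangent line of the construction)
    (hm : ∀ ℓ : Fin L, m ℓ = sInf {c : ℝ | 0 ≤ c ∧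
      ∀ x, atil ℓ.castSucc ≤ x → μ x ≤ c * (x - atil ℓ.castSucc) + R ℓ.castSucc})
    -- ã_{ℓ+1} is the abscissa where the line meets y = R_{ℓ+1}
    (hnext : ∀ ℓ : Fin L,
      m ℓ * (atil ℓ.succ - atil ℓ.castSucc) + R ℓ.castSucc = R ℓ.succ)
    -- g is the piecewise linear interpolation through the points (ã_ℓ, R_ℓ) …
    (hgseg : ∀ ℓ : Fin L, ∀ x ∈ Set.Icc (atil ℓ.castSucc) (atil ℓ.succ),
      g x = R ℓ.castSucc +
        (R ℓ.succ - R ℓ.castSucc) / (atil ℓ.succ - atil ℓ.castSucc) * (x - atil ℓ.castSucc))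
    -- … constant R_L after ã_L
    (hgtail : ∀ x, atil (Fin.last L) ≤ x → g x = R (Fin.last L)) :
    ConcaveOn ℝ (Set.Ici a0) g ∧ MonotoneOn g (Set.Ici a0) ∧
    ∀ x, a0 ≤ x → μ x ≤ g x :=
  stmt13_general L a0 R hRmono μ g hμbdd atil m ha0 hex hm hnext hgseg hgtail
end
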